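/- Let n ≥ 2 and α ∈ [0,1]. For every species tree S on n leaves, diam(PLR, S) ≤ α(n−1)(n−2) + (1−α)(2n−2), and if S is a caterpillar on n leaves then H(S) = (n−1)(n−2)/2 and diam(PLR, S) = α(n−1)(n−2) + (1−α)(2n−2); hence among all species trees with n leaves the diameter is maximized by caterpillars. -/

import Mathlib

open SimpleGraph

attribute [local instance] Classical.propDecidable

/-- A rooted tree: a finite connected acyclic graph with a distinguished root. -/
structure RTree (V : Type*) [Fintype V] where
  adj : SimpleGraph V
  isTree : adj.IsTree
  root : V

variable {V : Type*} [Fintype V]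

/-- `Anc T a b` : `a` is an ancestor of `b` (i.e. `b ⪯ a`), expressed as:
`a` lies on the (unique) path from the root to `b`. -/
def Anc (T : RTree V) (a b : V) : Prop :=
  T.adj.dist T.root b = T.adj.dist T.root a + T.adj.dist a b

/-- `IsChild T c p` : `c` is a child of `p`. -/
def IsChild (T : RTree V) (c p : V) : Prop :=
  T.adj.Adj c p ∧ Anc T p c

/-- The set of children of `v`. -/
def childSet (T : RTree V) (v : V) : Set V := {c | IsChild T c v}

/-- A leaf is a node with no children. -/
def IsLeaf (T : RTree V) (v : V) : Prop := ∀ c, ¬ IsChild T c v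

/-- The clade of `v`: the set of leaves descending from `v`. -/
def clade (T : RTree V) (v : V) : Set V := {x | IsLeaf T x ∧ Anc T v x}

/-- `w` is the lowest common ancestor of the set `X` in `T`. -/
def IsLCA (T : RTree V) (X : Set V) (w : V) : Prop :=
  (∀ x ∈ X, Anc T w x) ∧ ∀ w', (∀ x ∈ X, Anc T w' x) → Anc T w' w

/-- A species tree is a rooted binary tree: every internal node has exactly two children. -/
def IsSpeciesTree (S : RTree V) : Prop :=
  ∀ v, ¬ IsLeaf S v → (childSet S v).ncard = 2

/-- Number of leaves of a rooted tree. -/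
noncomputable def numLeaves (T : RTree V) : ℕ := {v | IsLeaf T v}.ncard

/-- `Hsum S` = `H(S)`: the sum of root-to-internal-node distances in `S`. -/
noncomputable def Hsum (S : RTree V) : ℕ :=
  ∑ v : V, if IsLeaf S v then 0 else S.adj.dist S.root v

inductive Evt | dup | spec | extant
deriving DecidableEq

/-- A reconciled gene tree with species tree `S`, whose leaves are labeled bijectively by
the set of genes `Γ`. -/
structure Recon (Γ : Type*) (VG : Type*) (VS : Type*) [Fintype VG] [Fintype VS]
    (S : RTree VS) where
  tree : RTree VG
  geneLeaf : Γ → VG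
  geneLeaf_inj : Function.Injective geneLeaf
  geneLeaf_range : ∀ v, IsLeaf tree v ↔ ∃ g, geneLeaf g = v
  μ : VG → VS
  lbl : VG → Evt
  internal_children : ∀ v, ¬ IsLeaf tree v → 2 ≤ (childSet tree v).ncard
  leaf_species : ∀ v, IsLeaf tree v → IsLeaf S (μ v)
  leaf_lbl : ∀ v, IsLeaf tree v → lbl v = Evt.extant
  internal_lbl : ∀ v, ¬ IsLeaf tree v → lbl v = Evt.dup ∨ lbl v = Evt.spec
  time_consistent : ∀ a b, Anc tree a b → Anc S (μ a) (μ b)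
  spec_two_children : ∀ v, lbl v = Evt.spec →
    ¬ IsLeaf S (μ v) ∧ (childSet tree v).ncard = 2
  spec_separates : ∀ v, lbl v = Evt.spec →
    ∀ v₁ v₂, IsChild tree v₁ v → IsChild tree v₂ v → v₁ ≠ v₂ →
      ∃ s₁ s₂, IsChild S s₁ (μ v) ∧ IsChild S s₂ (μ v) ∧ s₁ ≠ s₂ ∧
        ((Anc S s₁ (μ v₁) ∧ Anc S s₂ (μ v₂)) ∨ (Anc S s₂ (μ v₁) ∧ Anc S s₁ (μ v₂)))

variable {Γ : Type*} {VS VG₁ VG₂ : Type*} [Fintype VS] [Fintype VG₁] [Fintype VG₂]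
  {S : RTree VS}

/-- The clade of a gene tree node, as a set of genes. -/
def gclade (𝒢 : Recon Γ VG₁ VS S) (v : VG₁) : Set Γ :=
  {g | Anc 𝒢.tree v (𝒢.geneLeaf g)}

/-- Two reconciled gene trees (over the same species tree and gene set) are comparable if
corresponding extant genes map to the same species. -/
def Comparable (𝒢₁ : Recon Γ VG₁ VS S) (𝒢₂ : Recon Γ VG₂ VS S) : Prop :=
  ∀ g, 𝒢₁.μ (𝒢₁.geneLeaf g) = 𝒢₂.μ (𝒢₂.geneLeaf g)

/-- `m` is the correspondence map `v ↦ lca_{G₂}(L(G₁(v)))`. -/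
def IsLcaMap (𝒢₁ : Recon Γ VG₁ VS S) (𝒢₂ : Recon Γ VG₂ VS S) (m : VG₁ → VG₂) : Prop :=
  ∀ v, IsLCA 𝒢₂.tree (𝒢₂.geneLeaf '' gclade 𝒢₁ v) (m v)

/-- `μ` is the lca-mapping: every node maps to the lca of the species of its leaf descendants. -/
def UsesLcaMapping (𝒢 : Recon Γ VG₁ VS S) : Prop :=
  ∀ v, IsLCA S (𝒢.μ '' clade 𝒢.tree v) (𝒢.μ v)

/-- The path component `d_path(𝒢₁,𝒢₂)` (with `m` the lca correspondence map). -/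
noncomputable def dPath (𝒢₁ : Recon Γ VG₁ VS S) (𝒢₂ : Recon Γ VG₂ VS S)
    (m : VG₁ → VG₂) : ℕ :=
  ∑ v : VG₁, S.adj.dist (𝒢₁.μ v) (𝒢₂.μ (m v))

/-- The label component `d_lbl(𝒢₁,𝒢₂)`. -/
noncomputable def dLbl (𝒢₁ : Recon Γ VG₁ VS S) (𝒢₂ : Recon Γ VG₂ VS S)
    (m : VG₁ → VG₂) : ℕ :=
  {v : VG₁ | 𝒢₁.lbl v ≠ 𝒢₂.lbl (m v)}.ncard

/-- The asymmetric dissimilarity `d_asym = α·d_path + (1−α)·d_lbl`. -/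
noncomputable def dAsym (α : ℝ) (𝒢₁ : Recon Γ VG₁ VS S) (𝒢₂ : Recon Γ VG₂ VS S)
    (m : VG₁ → VG₂) : ℝ :=
  α * (dPath 𝒢₁ 𝒢₂ m : ℝ) + (1 - α) * (dLbl 𝒢₁ 𝒢₂ m : ℝ)

/-- The Path-Label Reconciliation dissimilarity `PLR(𝒢₁,𝒢₂)`, where `m₁₂`, `m₂₁` are the
lca correspondence maps in the two directions. -/
noncomputable def PLR (α : ℝ) (𝒢₁ : Recon Γ VG₁ VS S) (𝒢₂ : Recon Γ VG₂ VS S)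
    (m₁₂ : VG₁ → VG₂) (m₂₁ : VG₂ → VG₁) : ℝ :=
  dAsym α 𝒢₁ 𝒢₂ m₁₂ + dAsym α 𝒢₂ 𝒢₁ m₂₁

/-- An edge `uv` (with `u` the parent of `v`) is redundant if both endpoints are duplications
mapped to the same species. -/
def RedundantEdge (𝒢 : Recon Γ VG₁ VS S) (u v : VG₁) : Prop :=
  IsChild 𝒢.tree v u ∧ 𝒢.μ u = 𝒢.μ v ∧ 𝒢.lbl u = Evt.dup ∧ 𝒢.lbl v = Evt.dup

/-- A reconciled gene tree is least duplication-resolved if it has no redundant edge. -/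
def LeastDupResolved (𝒢 : Recon Γ VG₁ VS S) : Prop :=
  ∀ u v, ¬ RedundantEdge 𝒢 u v

/-- `𝒢'` is obtained from `𝒢` by contracting the edge `uv` (`u` the parent of `v`), i.e.
deleting `v` and attaching its children to `u`; `φ` is the corresponding quotient map. -/
def IsContractionOf (𝒢 : Recon Γ VG₁ VS S) (u v : VG₁) (𝒢' : Recon Γ VG₂ VS S)
    (φ : VG₁ → VG₂) : Prop :=
  Function.Surjective φ ∧
  φ u = φ v ∧
  (∀ a b, φ a = φ b → a = b ∨ (a = u ∧ b = v) ∨ (a = v ∧ b = u)) ∧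
  (∀ x y, 𝒢'.tree.adj.Adj x y ↔
    ∃ a b, φ a = x ∧ φ b = y ∧ 𝒢.tree.adj.Adj a b ∧ ¬(a = u ∧ b = v) ∧ ¬(a = v ∧ b = u)) ∧
  𝒢'.tree.root = φ 𝒢.tree.root ∧
  (∀ g, 𝒢'.geneLeaf g = φ (𝒢.geneLeaf g)) ∧
  (∀ a, 𝒢'.μ (φ a) = 𝒢.μ a) ∧
  (∀ a, 𝒢'.lbl (φ a) = 𝒢.lbl a)

/-- Symmetrized redundancy relation on nodes. -/
def RedundantAdj (𝒢 : Recon Γ VG₁ VS S) (a b : VG₁) : Prop :=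
  RedundantEdge 𝒢 a b ∨ RedundantEdge 𝒢 b a

/-- `𝒢'` is the least duplication-resolved tree `LR(𝒢)` obtained by contracting every
redundant edge of `𝒢`; `φ` is the corresponding quotient map. -/
def IsLROf (𝒢 : Recon Γ VG₁ VS S) (𝒢' : Recon Γ VG₂ VS S) (φ : VG₁ → VG₂) : Prop :=
  Function.Surjective φ ∧
  (∀ a b, φ a = φ b ↔ Relation.EqvGen (RedundantAdj 𝒢) a b) ∧
  (∀ x y, 𝒢'.tree.adj.Adj x y ↔
    ∃ a b, φ a = x ∧ φ b = y ∧ 𝒢.tree.adj.Adj a b ∧ ¬ RedundantAdj 𝒢 a b) ∧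
  𝒢'.tree.root = φ 𝒢.tree.root ∧
  (∀ g, 𝒢'.geneLeaf g = φ (𝒢.geneLeaf g)) ∧
  (∀ a, 𝒢'.μ (φ a) = 𝒢.μ a) ∧
  (∀ a, 𝒢'.lbl (φ a) = 𝒢.lbl a)

/-- Isomorphism of reconciled gene trees: a leaf-fixing bijection preserving edges,
species maps and event labels. -/
def ReconIso (𝒢₁ : Recon Γ VG₁ VS S) (𝒢₂ : Recon Γ VG₂ VS S) : Prop :=
  ∃ φ : VG₁ ≃ VG₂,
    (∀ g, φ (𝒢₁.geneLeaf g) = 𝒢₂.geneLeaf g) ∧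
    (∀ a b, 𝒢₂.tree.adj.Adj (φ a) (φ b) ↔ 𝒢₁.tree.adj.Adj a b) ∧
    (∀ v, 𝒢₂.μ (φ v) = 𝒢₁.μ v) ∧
    (∀ v, 𝒢₂.lbl (φ v) = 𝒢₁.lbl v)

/-- Exactly one gene per species: the gene set is the set of species leaves, and each gene
resides in its own species. -/
def OneGenePerSpecies (𝒢 : Recon {s : VS // IsLeaf S s} VG₁ VS S) : Prop :=
  ∀ g, 𝒢.μ (𝒢.geneLeaf g) = g.1

/-- A caterpillar: every internal node has at most one internal child. -/
def Caterpillar (T : RTree VS) : Prop :=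
  ∀ v, ¬ IsLeaf T v → {c | IsChild T c v ∧ ¬ IsLeaf T c}.ncard ≤ 1


/-!
For an internal gene node `v`, both `μ₁(v)` and `μ₂(m(v))` are ancestors of every species below
`v`, so their distance is at most the number of non-root common ancestors of these species.
Summing over `v` and exchanging the sums, each non-root species node `c` is counted once for every
internal gene node all of whose species lie below `c`. These gene nodes form a forest whose
nodes have at least two children and whose leaves are distinct species below `c`, so there are
fewer of them than leaves below `c`, i.e. at most as many as internal species nodes below `c`.
Exchanging the sums back gives `d_path ≤ H(S)`; and `H(S)` counts the ordered pairs of internal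
species nodes in ancestor relation, so `2 H(S) ≤ (n - 1)(n - 2)`, with equality exactly when the
internal nodes form a chain, as they do in a caterpillar. Labels can only differ at the at most
`n - 1` internal gene nodes. The bound is attained by the species tree read once with all
speciations and once with all duplications placed at the root.
-/

lemma SimpleGraph.Connected.dist_add_dist_of_mem_support {W : Type*} {G : SimpleGraph W}
    (hG : G.Connected) {u w x : W} {p : G.Walk u w} (hp : p.length = G.dist u w)
    (hx : x ∈ p.support) : G.dist u x + G.dist x w = G.dist u w := by
  have hlen := congrArg Walk.length (p.take_spec hx)
  rw [Walk.length_append] at hlen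
  have := dist_le (p.takeUntil x hx)
  have := dist_le (p.dropUntil x hx)
  have := hG.dist_triangle (u := u) (v := x) (w := w)
  omega

variable {T : RTree V} {a b c v x z : V}

lemma RTree.connected (T : RTree V) : T.adj.Connected := T.isTree.connected

lemma RTree.anc_refl (T : RTree V) (a : V) : Anc T a a := by
  simp [Anc]

lemma RTree.anc_root (T : RTree V) (b : V) : Anc T T.root b := by
  simp [Anc]

lemma Anc.dist_eq (h : Anc T a b) :
    T.adj.dist a b = T.adj.dist T.root b - T.adj.dist T.root a := by
  unfold Anc at h; omega

lemma Anc.depth_le (h : Anc T a b) : T.adj.dist T.root a ≤ T.adj.dist T.root b := by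
  unfold Anc at h; omega

lemma Anc.eq_of_depth_le (h : Anc T a b)
    (hd : T.adj.dist T.root b ≤ T.adj.dist T.root a) : a = b := by
  unfold Anc at h
  exact T.connected.dist_eq_zero_iff.mp (by omega)

lemma Anc.antisymm (h₁ : Anc T a b) (h₂ : Anc T b a) : a = b :=
  h₁.eq_of_depth_le h₂.depth_le

lemma Anc.trans (h₁ : Anc T a b) (h₂ : Anc T b c) : Anc T a c := by
  unfold Anc at *
  have := T.connected.dist_triangle (u := T.root) (v := a) (w := c)
  have := T.connected.dist_triangle (u := a) (v := b) (w := c)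
  omega

lemma Anc.depth_lt (h : Anc T a b) (hne : a ≠ b) :
    T.adj.dist T.root a < T.adj.dist T.root b :=
  lt_of_le_of_ne h.depth_le fun hd => hne (h.eq_of_depth_le hd.ge)

lemma anc_of_mem_support {p : T.adj.Walk T.root b}
    (hp : p.length = T.adj.dist T.root b) (ha : a ∈ p.support) : Anc T a b :=
  (T.connected.dist_add_dist_of_mem_support hp ha).symm

/-- Paths in a tree are unique, so `p` is the geodesic from the root through `a` to `b`. -/
lemma Anc.mem_support (h : Anc T a b) (p : T.adj.Path T.root b) : a ∈ p.1.support := by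
  obtain ⟨q₁, hq₁⟩ := T.connected.exists_walk_length_eq_dist T.root a
  obtain ⟨q₂, hq₂⟩ := T.connected.exists_walk_length_eq_dist a b
  have hlen : (q₁.append q₂).length = T.adj.dist T.root b := by
    rw [Walk.length_append, hq₁, hq₂, h]
  have hpath := Walk.isPath_of_length_eq_dist _ hlen
  rw [← (T.isTree.isAcyclic.subsingleton_path _ _).elim ⟨_, hpath⟩ p]
  rw [Walk.mem_support_append_iff]
  exact Or.inl q₁.end_mem_support

lemma Anc.of_depth_le (hac : Anc T a c) (hbc : Anc T b c)
    (hd : T.adj.dist T.root a ≤ T.adj.dist T.root b) : Anc T a b := by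
  obtain ⟨q, hq⟩ := T.connected.exists_walk_length_eq_dist T.root b
  obtain ⟨r, hr⟩ := T.connected.exists_walk_length_eq_dist b c
  have hlen : (q.append r).length = T.adj.dist T.root c := by
    rw [Walk.length_append, hq, hr, hbc]
  have ha := hac.mem_support ⟨_, Walk.isPath_of_length_eq_dist _ hlen⟩
  rcases (Walk.mem_support_append_iff _ _).mp ha with ha | ha
  · exact anc_of_mem_support hq ha
  · have hsplit := T.connected.dist_add_dist_of_mem_support hr ha
    have hba : b = a := T.connected.dist_eq_zero_iff.mp (by unfold Anc at hac hbc; omega)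
    exact hba ▸ T.anc_refl b

lemma IsChild.depth_eq (h : IsChild T c a) :
    T.adj.dist T.root c = T.adj.dist T.root a + 1 := by
  have := dist_eq_one_iff_adj.mpr h.1.symm
  have := h.2
  unfold Anc at this
  omega

lemma IsChild.not_isLeaf (h : IsChild T c a) : ¬ IsLeaf T a := fun hl => hl c h

lemma IsChild.eq_of_anc {c₁ c₂ : V} (h₁ : IsChild T c₁ v) (h₂ : IsChild T c₂ v)
    (ha₁ : Anc T c₁ x) (ha₂ : Anc T c₂ x) : c₁ = c₂ := by
  have := h₁.depth_eq
  have := h₂.depth_eq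
  exact (ha₁.of_depth_le ha₂ (by omega)).eq_of_depth_le (by omega)

lemma IsChild.parent_unique (h₁ : IsChild T v a) (h₂ : IsChild T v b) : a = b := by
  have := h₁.depth_eq
  have := h₂.depth_eq
  exact (h₁.2.of_depth_le h₂.2 (by omega)).eq_of_depth_le (by omega)

lemma Anc.exists_child (h : Anc T a b) (hne : a ≠ b) : ∃ c, IsChild T c a ∧ Anc T c b := by
  obtain ⟨r, hr⟩ := T.connected.exists_walk_length_eq_dist a b
  obtain ⟨c, hadj, r', rfl⟩ := Walk.exists_eq_cons_of_ne hne r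
  have hsplit := T.connected.dist_add_dist_of_mem_support hr (by simp : c ∈ (r'.cons hadj).support)
  have hac := dist_eq_one_iff_adj.mpr hadj
  have := T.connected.dist_triangle (u := T.root) (v := a) (w := c)
  have := T.connected.dist_triangle (u := T.root) (v := c) (w := b)
  unfold Anc at h
  exact ⟨c, ⟨hadj.symm, by unfold Anc; omega⟩, by unfold Anc; omega⟩

lemma Anc.not_isLeaf (h : Anc T a b) (hne : a ≠ b) : ¬ IsLeaf T a := by
  obtain ⟨c, hc, -⟩ := h.exists_child hne
  exact hc.not_isLeaf

lemma IsLeaf.eq_of_anc (hl : IsLeaf T v) (h : Anc T v x) : v = x := by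
  by_contra hne
  exact h.not_isLeaf hne hl

lemma RTree.exists_parent (h : v ≠ T.root) : ∃ a, IsChild T v a := by
  obtain ⟨p, hp⟩ := T.connected.exists_walk_length_eq_dist T.root v
  obtain ⟨a, hadj, q, hq⟩ := Walk.exists_eq_cons_of_ne h p.reverse
  have ha : a ∈ p.support := by
    rw [← List.mem_reverse, ← Walk.support_reverse, hq]
    simp
  exact ⟨a, hadj, anc_of_mem_support hp ha⟩

lemma RTree.exists_leaf_anc (T : RTree V) (v : V) : ∃ x, IsLeaf T x ∧ Anc T v x := by
  obtain ⟨x, hx, hmax⟩ := Set.Finite.exists_maximalFor (fun y => T.adj.dist T.root y)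
    {y | Anc T v y} (Set.toFinite _) ⟨v, T.anc_refl v⟩
  refine ⟨x, fun c hc => ?_, hx⟩
  have := hc.depth_eq
  have := hmax (hx.trans hc.2) (by dsimp only; omega)
  dsimp only at this
  omega

open Finset

lemma RTree.card_ancestors (T : RTree V) (b : V) :
    #{a | Anc T a b} = T.adj.dist T.root b + 1 := by
  obtain ⟨p, hp⟩ := T.connected.exists_walk_length_eq_dist T.root b
  have hpath := Walk.isPath_of_length_eq_dist _ hp
  have : ({a | Anc T a b} : Finset V) = p.support.toFinset := by
    ext a
    simpa using ⟨fun h => h.mem_support ⟨p, hpath⟩, anc_of_mem_support hp⟩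
  rw [this, List.toFinset_card_of_nodup hpath.support_nodup, Walk.length_support, hp]

lemma RTree.card_ancestors_ne (hz : Anc T z b) :
    #{a | a ≠ z ∧ Anc T a b} = T.adj.dist T.root b := by
  have : ({a | a ≠ z ∧ Anc T a b} : Finset V) = ({a | Anc T a b} : Finset V).erase z := by
    ext a
    simp
  rw [this, card_erase_of_mem (by simpa using hz), T.card_ancestors, Nat.add_sub_cancel]

lemma RTree.card_childSet (T : RTree V) (v : V) :
    (childSet T v).ncard = #{c | IsChild T c v} := by
  rw [← Set.ncard_coe_finset]
  congr 1
  ext c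
  simp [childSet]

lemma RTree.sum_card_children (T : RTree V) (D : Finset V) :
    ∑ v ∈ D, #{c | IsChild T c v} = #{c | ∃ v ∈ D, IsChild T c v} := by
  rw [← card_biUnion]
  · congr 1
    ext c
    simp
  · intro v _ w _ hvw
    rw [Function.onFun, Finset.disjoint_left]
    intro c hcv hcw
    exact hvw ((mem_filter.mp hcv).2.parent_unique (mem_filter.mp hcw).2)

/-- Every descendant of `c` other than `c` is the child of exactly one descendant of `c`. -/
lemma RTree.sum_card_children_desc_add_one (T : RTree V) (c : V) :
    ∑ v ∈ {u | Anc T c u}, #{x | IsChild T x v} + 1 = #{u | Anc T c u} := by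
  have hchildren : #{x | ∃ v ∈ ({u | Anc T c u} : Finset V), IsChild T x v} + 1
      = #{u | Anc T c u} := by
    rw [← card_erase_add_one (s := {u | Anc T c u}) (a := c) (by simpa using T.anc_refl c)]
    congr 2
    ext x
    simp only [mem_filter, mem_univ, true_and, mem_erase]
    constructor
    · rintro ⟨v, hcv, hxv⟩
      refine ⟨fun hxc => ?_, hcv.trans hxv.2⟩
      subst hxc
      have := hxv.depth_eq
      have := hcv.depth_le
      omega
    · rintro ⟨hxc, hcx⟩
      obtain ⟨v, hxv⟩ := T.exists_parent fun h => hxc (hcx.antisymm (h ▸ T.anc_root c :)).symm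
      have := hxv.depth_eq
      have := hcx.depth_lt (Ne.symm hxc)
      exact ⟨v, hcx.of_depth_le hxv.2 (by omega), hxv⟩
  rw [T.sum_card_children, hchildren]

lemma IsSpeciesTree.card_internal_add_one (hT : IsSpeciesTree T) (c : V) :
    #{u | Anc T c u ∧ ¬ IsLeaf T u} + 1 = #{x | Anc T c x ∧ IsLeaf T x} := by
  have hsum : ∑ v ∈ {u | Anc T c u}, #{x | IsChild T x v}
      = ∑ v ∈ {u | Anc T c u ∧ ¬ IsLeaf T u}, 2 := by
    rw [← sum_filter_add_sum_filter_not _ (IsLeaf T), filter_filter, filter_filter]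
    have hleaf : ∀ v ∈ ({u | Anc T c u ∧ IsLeaf T u} : Finset V), #{x | IsChild T x v} = 0 :=
      fun v hv => by simpa using fun x => (mem_filter.mp hv).2.2 x
    have hint : ∀ v ∈ ({u | Anc T c u ∧ ¬ IsLeaf T u} : Finset V), #{x | IsChild T x v} = 2 :=
      fun v hv => by rw [← T.card_childSet]; exact hT v (mem_filter.mp hv).2.2
    rw [sum_congr rfl hleaf, sum_congr rfl hint, sum_const_zero, zero_add]
  have hdesc := T.sum_card_children_desc_add_one c
  have hsplit := card_filter_add_card_filter_not (s := ({u | Anc T c u} : Finset V)) (IsLeaf T)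
  rw [filter_filter, filter_filter] at hsplit
  rw [hsum, sum_const, smul_eq_mul] at hdesc
  omega

lemma IsSpeciesTree.card_internal_add_one_eq_numLeaves (hS : IsSpeciesTree S) :
    #{u | ¬ IsLeaf S u} + 1 = numLeaves S := by
  have := hS.card_internal_add_one S.root
  simp only [S.anc_root, true_and] at this
  rw [this, numLeaves, ← Set.ncard_coe_finset, coe_filter]
  simp

/-- Count the children of `D` twice: there are at least `2 #D` of them, and all lie in
`(D \ {v₀}) ∪ L`. -/
lemma RTree.card_add_one_le_of_isChild {D L : Finset V} {v₀ : V}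
    (hD : ∀ v ∈ D, 2 ≤ (childSet T v).ncard) (hv₀ : v₀ ∈ D)
    (htop : ∀ v ∈ D, ¬ IsChild T v₀ v) (hL : ∀ v ∈ D, ∀ c, IsChild T c v → c ∈ D ∨ c ∈ L) :
    #D + 1 ≤ #L := by
  have hlow : 2 * #D ≤ ∑ v ∈ D, #{c | IsChild T c v} := by
    rw [mul_comm, ← smul_eq_mul, ← sum_const]
    exact sum_le_sum fun v hv => T.card_childSet v ▸ hD v hv
  have hsub : ({c | ∃ v ∈ D, IsChild T c v} : Finset V) ⊆ D.erase v₀ ∪ L := by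
    intro c hc
    obtain ⟨v, hv, hcv⟩ := by simpa using hc
    rcases hL v hv c hcv with h | h
    · exact mem_union_left _ (mem_erase.mpr ⟨fun hc₀ => htop v hv (hc₀ ▸ hcv), h⟩)
    · exact mem_union_right _ h
  have := card_le_card hsub
  have := card_union_le (D.erase v₀) L
  have := card_erase_of_mem hv₀
  have := card_pos.mpr ⟨v₀, hv₀⟩
  rw [T.sum_card_children] at hlow
  omega

lemma RTree.isLCA_clade (hT : ∀ v, ¬ IsLeaf T v → 2 ≤ (childSet T v).ncard) (v : V) :
    IsLCA T (clade T v) v := by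
  refine ⟨fun x hx => hx.2, fun w hw => ?_⟩
  by_cases hv : IsLeaf T v
  · exact hw v ⟨hv, T.anc_refl v⟩
  obtain ⟨c₁, hc₁, c₂, hc₂, hne⟩ := (Set.one_lt_ncard (Set.toFinite _)).mp (hT v hv)
  obtain ⟨x₁, hx₁, hcx₁⟩ := T.exists_leaf_anc c₁
  obtain ⟨x₂, hx₂, hcx₂⟩ := T.exists_leaf_anc c₂
  have hvx₁ := hc₁.2.trans hcx₁
  have hwx₁ := hw x₁ ⟨hx₁, hvx₁⟩
  rcases le_total (T.adj.dist T.root w) (T.adj.dist T.root v) with hd | hd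
  · exact hwx₁.of_depth_le hvx₁ hd
  · have hvw := hvx₁.of_depth_le hwx₁ hd
    by_cases hvw' : v = w
    · exact hvw' ▸ T.anc_refl v
    obtain ⟨c, hc, hcw⟩ := hvw.exists_child hvw'
    have h₁ := hc.eq_of_anc hc₁ (hcw.trans hwx₁) hcx₁
    have h₂ := hc.eq_of_anc hc₂ (hcw.trans (hw x₂ ⟨hx₂, hc₂.2.trans hcx₂⟩)) hcx₂
    exact absurd (h₁.symm.trans h₂) hne

lemma RTree.dist_le_card_commonAnc {X : Set V} (hX : X.Nonempty)
    (ha : X ⊆ {x | Anc T a x}) (hb : X ⊆ {x | Anc T b x}) :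
    T.adj.dist a b ≤ #{c | c ≠ T.root ∧ X ⊆ {x | Anc T c x}} := by
  obtain ⟨x, hx⟩ := hX
  wlog hd : T.adj.dist T.root a ≤ T.adj.dist T.root b generalizing a b
  · rw [dist_comm]
    exact this hb ha (by omega)
  have hab := (ha hx).of_depth_le (hb hx) hd
  calc T.adj.dist a b ≤ T.adj.dist T.root b := by rw [hab.dist_eq]; omega
    _ = #{c | c ≠ T.root ∧ Anc T c b} := (T.card_ancestors_ne (T.anc_root b)).symm
    _ ≤ _ := card_le_card fun c hc => by
      simp only [mem_filter, mem_univ, true_and] at hc ⊢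
      exact ⟨hc.1, fun y hy => hc.2.trans (hb hy)⟩

lemma RTree.hsum_eq_sum_depth (T : RTree V) :
    Hsum T = ∑ u ∈ {u | ¬ IsLeaf T u}, T.adj.dist T.root u := by
  rw [Hsum, sum_filter]
  exact sum_congr rfl fun u _ => by split_ifs <;> rfl

lemma RTree.hsum_eq_sum_card_internal_desc (T : RTree V) :
    Hsum T = ∑ c ∈ {c | c ≠ T.root}, #{u | Anc T c u ∧ ¬ IsLeaf T u} := by
  rw [T.hsum_eq_sum_depth]
  calc _ = ∑ u ∈ {u | ¬ IsLeaf T u},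
        #(({c | c ≠ T.root} : Finset V).bipartiteAbove (fun u c => Anc T c u) u) := by
        refine sum_congr rfl fun u _ => ?_
        rw [bipartiteAbove, filter_filter, T.card_ancestors_ne (T.anc_root u)]
    _ = _ := sum_card_bipartiteAbove_eq_sum_card_bipartiteBelow _
    _ = _ := by simp only [bipartiteBelow, filter_filter, and_comm]

lemma Finset.sum_card_filter_ne_and_or_eq_two_mul {α : Type*} (s : Finset α)
    (r : α → α → Prop) (hr : ∀ a ∈ s, ∀ b ∈ s, r a b → r b a → a = b) :
    ∑ b ∈ s, #(s.filter fun a => a ≠ b ∧ (r a b ∨ r b a))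
      = 2 * ∑ b ∈ s, #(s.filter fun a => a ≠ b ∧ r a b) := by
  have hsplit : ∀ b ∈ s, #(s.filter fun a => a ≠ b ∧ (r a b ∨ r b a))
      = #(s.filter fun a => a ≠ b ∧ r a b) + #(s.filter fun a => b ≠ a ∧ r b a) := by
    intro b hb
    rw [← card_union_of_disjoint]
    · congr 1
      ext a
      simp only [mem_filter, mem_union, ne_comm (a := b)]
      tauto
    · rw [disjoint_filter]
      exact fun a ha h₁ h₂ => h₁.1 (hr a ha b hb h₁.2 h₂.2)
  rw [sum_congr rfl hsplit, sum_add_distrib, two_mul]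
  congr 1
  exact sum_card_bipartiteAbove_eq_sum_card_bipartiteBelow (fun b a => b ≠ a ∧ r b a)

lemma RTree.hsum_eq_sum_card_strict_anc (T : RTree V) :
    Hsum T = ∑ u ∈ {u | ¬ IsLeaf T u},
      #(({u | ¬ IsLeaf T u} : Finset V).filter fun a => a ≠ u ∧ Anc T a u) := by
  rw [T.hsum_eq_sum_depth]
  refine sum_congr rfl fun u _ => ?_
  rw [← T.card_ancestors_ne (T.anc_refl u), filter_filter]
  congr 1
  ext a
  simpa using fun hau ha => ha.not_isLeaf hau

lemma RTree.two_mul_hsum_add_card_eq_sum (T : RTree V) :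
    2 * Hsum T + #{u | ¬ IsLeaf T u} = ∑ u ∈ {u | ¬ IsLeaf T u},
      (#(({u | ¬ IsLeaf T u} : Finset V).filter fun a => a ≠ u ∧ (Anc T a u ∨ Anc T u a)) + 1) := by
  rw [sum_add_distrib, sum_card_filter_ne_and_or_eq_two_mul _ _ fun a _ b _ => Anc.antisymm,
    ← T.hsum_eq_sum_card_strict_anc, sum_const, smul_eq_mul, mul_one]

lemma RTree.two_mul_hsum_add_card_le (T : RTree V) :
    2 * Hsum T + #{u | ¬ IsLeaf T u} ≤ #{u | ¬ IsLeaf T u} * #{u | ¬ IsLeaf T u} := by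
  rw [T.two_mul_hsum_add_card_eq_sum, ← smul_eq_mul, ← sum_const]
  refine sum_le_sum fun u hu => ?_
  rw [← card_erase_add_one hu]
  exact Nat.add_le_add_right (card_le_card fun a ha => by simp_all) 1

lemma Caterpillar.anc_or_anc (hcat : Caterpillar S) {u w : VS} (hu : ¬ IsLeaf S u)
    (hw : ¬ IsLeaf S w) : Anc S u w ∨ Anc S w u := by
  by_contra! ⟨huw, hwu⟩
  obtain ⟨z, hz, hmax⟩ := exists_max_image ({z | Anc S z u ∧ Anc S z w} : Finset VS)
    (S.adj.dist S.root) ⟨S.root, by simp [S.anc_root]⟩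
  simp only [mem_filter, mem_univ, true_and] at hz hmax
  obtain ⟨cu, hcu, hcuu⟩ := hz.1.exists_child fun h => huw (h ▸ hz.2)
  obtain ⟨cw, hcw, hcww⟩ := hz.2.exists_child fun h => hwu (h ▸ hz.1)
  have hne : cu ≠ cw := fun h => by
    have := hmax cu ⟨hcuu, h ▸ hcww⟩
    have := hcu.depth_eq
    omega
  have hsub : ({cu, cw} : Set VS) ⊆ {c | IsChild S c z ∧ ¬ IsLeaf S c} := by
    rintro c (rfl | rfl)
    · exact ⟨hcu, fun hl => hu (hl.eq_of_anc hcuu ▸ hl)⟩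
    · exact ⟨hcw, fun hl => hw (hl.eq_of_anc hcww ▸ hl)⟩
  have := Set.ncard_le_ncard hsub
  rw [Set.ncard_pair hne] at this
  have := hcat z hcu.not_isLeaf
  omega

lemma Caterpillar.two_mul_hsum_add_card_eq (hcat : Caterpillar S) :
    2 * Hsum S + #{u | ¬ IsLeaf S u} = #{u | ¬ IsLeaf S u} * #{u | ¬ IsLeaf S u} := by
  rw [S.two_mul_hsum_add_card_eq_sum, ← smul_eq_mul, ← sum_const]
  refine sum_congr rfl fun u hu => ?_
  rw [← card_erase_add_one hu]
  congr 2
  ext a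
  simp only [mem_filter, mem_univ, true_and, mem_erase] at hu ⊢
  exact ⟨fun h => ⟨h.2.1, h.1⟩, fun h => ⟨h.2, h.1, hcat.anc_or_anc h.2 hu⟩⟩

namespace Recon

variable (𝒢 : Recon Γ VG₁ VS S)

lemma isLeaf_geneLeaf (g : Γ) : IsLeaf 𝒢.tree (𝒢.geneLeaf g) :=
  (𝒢.geneLeaf_range _).mpr ⟨g, rfl⟩

lemma gclade_geneLeaf (g : Γ) : gclade 𝒢 (𝒢.geneLeaf g) = {g} := by
  ext g'
  exact ⟨fun h => (𝒢.geneLeaf_inj ((𝒢.isLeaf_geneLeaf g).eq_of_anc h)).symm,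
    fun h => h ▸ 𝒢.tree.anc_refl _⟩

lemma gclade_nonempty (v : VG₁) : (gclade 𝒢 v).Nonempty := by
  obtain ⟨x, hx, hvx⟩ := 𝒢.tree.exists_leaf_anc v
  obtain ⟨g, rfl⟩ := (𝒢.geneLeaf_range x).mp hx
  exact ⟨g, hvx⟩

lemma card_internal_gclade_subset_add_one_le [Fintype Γ] (P : Set Γ)
    (hne : ∃ v, ¬ IsLeaf 𝒢.tree v ∧ gclade 𝒢 v ⊆ P) :
    #{v | ¬ IsLeaf 𝒢.tree v ∧ gclade 𝒢 v ⊆ P} + 1 ≤ #{g | g ∈ P} := by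
  set D : Finset VG₁ := {v | ¬ IsLeaf 𝒢.tree v ∧ gclade 𝒢 v ⊆ P}
  obtain ⟨v₀, hv₀, hmin⟩ := D.exists_min_image (𝒢.tree.adj.dist 𝒢.tree.root)
    (by obtain ⟨v, hv⟩ := hne; exact ⟨v, by simpa [D] using hv⟩)
  rw [← card_image_of_injective _ 𝒢.geneLeaf_inj]
  refine 𝒢.tree.card_add_one_le_of_isChild (fun v hv => 𝒢.internal_children v ?_) hv₀
    (fun v hv hv₀v => ?_) (fun v hv c hcv => ?_)
  · exact (mem_filter.mp hv).2.1
  · have := hmin v hv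
    have := hv₀v.depth_eq
    omega
  · have hcP : gclade 𝒢 c ⊆ P := fun g hg => (mem_filter.mp hv).2.2 (hcv.2.trans hg)
    by_cases hc : IsLeaf 𝒢.tree c
    · obtain ⟨g, rfl⟩ := (𝒢.geneLeaf_range c).mp hc
      exact Or.inr (mem_image_of_mem _ (by simpa using hcP (𝒢.tree.anc_refl _)))
    · exact Or.inl (by simpa [D] using ⟨hc, hcP⟩)

end Recon

lemma card_subtype_isLeaf_anc (c : VS) :
    #{g : {s // IsLeaf S s} | Anc S c g.1} = #{x | Anc S c x ∧ IsLeaf S x} := by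
  rw [← card_map (Function.Embedding.subtype _)]
  congr 1
  ext x
  simp [and_comm]

lemma Recon.card_internal_below_le (hS : IsSpeciesTree S)
    (𝒢 : Recon {s // IsLeaf S s} VG₁ VS S) (c : VS) :
    #{v | ¬ IsLeaf 𝒢.tree v ∧ gclade 𝒢 v ⊆ {g | Anc S c g.1}}
      ≤ #{u | Anc S c u ∧ ¬ IsLeaf S u} := by
  by_cases hne : ∃ v, ¬ IsLeaf 𝒢.tree v ∧ gclade 𝒢 v ⊆ {g | Anc S c g.1}
  · have := 𝒢.card_internal_gclade_subset_add_one_le _ hne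
    have := hS.card_internal_add_one c
    rw [← card_subtype_isLeaf_anc] at this
    simp only [Set.mem_ofPred_eq] at *
    omega
  · rw [filter_eq_empty_iff.mpr fun v _ => not_exists.mp hne v, card_empty]
    exact Nat.zero_le _

lemma Recon.sum_card_commonAnc_le_hsum (hS : IsSpeciesTree S)
    (𝒢 : Recon {s // IsLeaf S s} VG₁ VS S) :
    ∑ v ∈ {v | ¬ IsLeaf 𝒢.tree v}, #{c | c ≠ S.root ∧ gclade 𝒢 v ⊆ {g | Anc S c g.1}}
      ≤ Hsum S := by
  rw [S.hsum_eq_sum_card_internal_desc]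
  calc _ = ∑ v ∈ {v | ¬ IsLeaf 𝒢.tree v}, #(({c | c ≠ S.root} : Finset VS).bipartiteAbove
        (fun v c => gclade 𝒢 v ⊆ {g | Anc S c g.1}) v) := by
        simp only [bipartiteAbove, filter_filter]
    _ = _ := sum_card_bipartiteAbove_eq_sum_card_bipartiteBelow _
    _ ≤ _ := sum_le_sum fun c _ => by
      rw [bipartiteBelow, filter_filter]
      exact 𝒢.card_internal_below_le hS c

lemma IsLcaMap.map_geneLeaf {𝒢₁ : Recon Γ VG₁ VS S} {𝒢₂ : Recon Γ VG₂ VS S} {m : VG₁ → VG₂}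
    (hm : IsLcaMap 𝒢₁ 𝒢₂ m) (g : Γ) : m (𝒢₁.geneLeaf g) = 𝒢₂.geneLeaf g := by
  have h := hm (𝒢₁.geneLeaf g)
  rw [𝒢₁.gclade_geneLeaf, Set.image_singleton] at h
  exact (h.1 _ rfl).antisymm (h.2 _ fun x hx => hx ▸ 𝒢₂.tree.anc_refl _)

lemma OneGenePerSpecies.anc_of_mem_gclade {𝒢 : Recon {s // IsLeaf S s} VG₁ VS S}
    (hOne : OneGenePerSpecies 𝒢) {v : VG₁} {g : {s // IsLeaf S s}} (hg : g ∈ gclade 𝒢 v) :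
    Anc S (𝒢.μ v) g.1 :=
  hOne g ▸ 𝒢.time_consistent _ _ hg

section Dissimilarity

variable {𝒢₁ : Recon {s // IsLeaf S s} VG₁ VS S} {𝒢₂ : Recon {s // IsLeaf S s} VG₂ VS S}
  {m : VG₁ → VG₂}

lemma dist_mu_lcaMap_le (hOne₁ : OneGenePerSpecies 𝒢₁) (hOne₂ : OneGenePerSpecies 𝒢₂)
    (hm : IsLcaMap 𝒢₁ 𝒢₂ m) (v : VG₁) :
    S.adj.dist (𝒢₁.μ v) (𝒢₂.μ (m v)) ≤ #{c | c ≠ S.root ∧ gclade 𝒢₁ v ⊆ {g | Anc S c g.1}} := by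
  have := S.dist_le_card_commonAnc ((𝒢₁.gclade_nonempty v).image Subtype.val)
    (a := 𝒢₁.μ v) (b := 𝒢₂.μ (m v)) ?_ ?_
  · simpa only [Set.image_subset_iff, Set.preimage_ofPred_eq] using this
  · rintro _ ⟨g, hg, rfl⟩
    exact hOne₁.anc_of_mem_gclade hg
  · rintro _ ⟨g, hg, rfl⟩
    exact hOne₂ g ▸ 𝒢₂.time_consistent _ _ ((hm v).1 _ ⟨g, hg, rfl⟩)

lemma dPath_le_hsum (hS : IsSpeciesTree S) (hOne₁ : OneGenePerSpecies 𝒢₁)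
    (hOne₂ : OneGenePerSpecies 𝒢₂) (hm : IsLcaMap 𝒢₁ 𝒢₂ m) : dPath 𝒢₁ 𝒢₂ m ≤ Hsum S := by
  rw [dPath, ← sum_filter_not_add_sum_filter _ (IsLeaf 𝒢₁.tree)]
  have hleaf : ∀ v ∈ ({v | IsLeaf 𝒢₁.tree v} : Finset VG₁),
      S.adj.dist (𝒢₁.μ v) (𝒢₂.μ (m v)) = 0 := fun v hv => by
    obtain ⟨g, rfl⟩ := (𝒢₁.geneLeaf_range v).mp (mem_filter.mp hv).2
    rw [hm.map_geneLeaf, hOne₁, hOne₂, dist_self]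
  rw [sum_eq_zero hleaf, add_zero]
  exact (sum_le_sum fun v _ => dist_mu_lcaMap_le hOne₁ hOne₂ hm v).trans
    (𝒢₁.sum_card_commonAnc_le_hsum hS)

lemma dLbl_add_one_le (hS : IsSpeciesTree S) (hm : IsLcaMap 𝒢₁ 𝒢₂ m) :
    dLbl 𝒢₁ 𝒢₂ m + 1 ≤ numLeaves S := by
  have hleaf : {v | 𝒢₁.lbl v ≠ 𝒢₂.lbl (m v)} ⊆ ↑({v | ¬ IsLeaf 𝒢₁.tree v} : Finset VG₁) := by
    intro v hv
    simp only [coe_filter, mem_univ, true_and, Set.mem_ofPred_eq]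
    intro hl
    obtain ⟨g, rfl⟩ := (𝒢₁.geneLeaf_range v).mp hl
    exact hv (by rw [hm.map_geneLeaf, 𝒢₁.leaf_lbl _ hl, 𝒢₂.leaf_lbl _ (𝒢₂.isLeaf_geneLeaf g)])
  have hint : #{v | ¬ IsLeaf 𝒢₁.tree v} ≤ #{u | ¬ IsLeaf S u} := by
    simpa [S.anc_root] using 𝒢₁.card_internal_below_le hS S.root
  have := Set.ncard_le_ncard hleaf
  rw [Set.ncard_coe_finset] at this
  have := hS.card_internal_add_one_eq_numLeaves
  rw [dLbl]
  omega

end Dissimilarity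

section Witnesses

variable (S)

noncomputable def specRecon (hS : IsSpeciesTree S) : Recon {s // IsLeaf S s} VS VS S where
  tree := S
  geneLeaf := Subtype.val
  geneLeaf_inj := Subtype.val_injective
  geneLeaf_range v := ⟨fun h => ⟨⟨v, h⟩, rfl⟩, fun ⟨g, hg⟩ => hg ▸ g.2⟩
  μ := id
  lbl v := if IsLeaf S v then .extant else .spec
  internal_children v hv := (hS v hv).ge
  leaf_species _ hv := hv
  leaf_lbl _ hv := if_pos hv
  internal_lbl _ hv := Or.inr (if_neg hv)
  time_consistent _ _ h := h
  spec_two_children v hv := by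
    have hv' : ¬ IsLeaf S v := fun hl => by simp [hl] at hv
    exact ⟨hv', hS v hv'⟩
  spec_separates _ _ v₁ v₂ h₁ h₂ hne :=
    ⟨v₁, v₂, h₁, h₂, hne, Or.inl ⟨S.anc_refl v₁, S.anc_refl v₂⟩⟩

noncomputable def rootDupRecon (hS : IsSpeciesTree S) : Recon {s // IsLeaf S s} VS VS S where
  tree := S
  geneLeaf := Subtype.val
  geneLeaf_inj := Subtype.val_injective
  geneLeaf_range v := ⟨fun h => ⟨⟨v, h⟩, rfl⟩, fun ⟨g, hg⟩ => hg ▸ g.2⟩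
  μ v := if IsLeaf S v then v else S.root
  lbl v := if IsLeaf S v then .extant else .dup
  internal_children v hv := (hS v hv).ge
  leaf_species _ hv := by simp [hv]
  leaf_lbl _ hv := if_pos hv
  internal_lbl _ hv := Or.inl (if_neg hv)
  time_consistent a b h := by
    by_cases ha : IsLeaf S a
    · simpa [ha, ← ha.eq_of_anc h] using S.anc_refl a
    · simpa [ha] using S.anc_root _
  spec_two_children v hv := by split_ifs at hv
  spec_separates v hv := by split_ifs at hv

lemma isLCA_image_val_anc (hS : IsSpeciesTree S) (v : VS) :
    IsLCA S (Subtype.val '' {g : {s // IsLeaf S s} | Anc S v g.1}) v := by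
  convert S.isLCA_clade (fun u hu => (hS u hu).ge) v
  ext x
  simp [clade, and_comm]

lemma plr_specRecon_rootDupRecon (hS : IsSpeciesTree S) (α : ℝ) :
    PLR α (specRecon S hS) (rootDupRecon S hS) id id
      = α * (2 * Hsum S) + (1 - α) * (2 * #{u | ¬ IsLeaf S u}) := by
  have hpath₁ : dPath (specRecon S hS) (rootDupRecon S hS) id = Hsum S :=
    sum_congr rfl fun v _ => by
      by_cases hv : IsLeaf S v <;> simp [specRecon, rootDupRecon, hv, dist_comm]
  have hpath₂ : dPath (rootDupRecon S hS) (specRecon S hS) id = Hsum S :=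
    sum_congr rfl fun v _ => by by_cases hv : IsLeaf S v <;> simp [specRecon, rootDupRecon, hv]
  have hlbl₁ : dLbl (specRecon S hS) (rootDupRecon S hS) id = #{u | ¬ IsLeaf S u} := by
    rw [dLbl, ← Set.ncard_coe_finset, coe_filter]
    congr 1
    ext v
    by_cases hv : IsLeaf S v <;> simp [specRecon, rootDupRecon, hv]
  have hlbl₂ : dLbl (rootDupRecon S hS) (specRecon S hS) id = #{u | ¬ IsLeaf S u} := by
    rw [dLbl, ← Set.ncard_coe_finset, coe_filter]
    congr 1
    ext v
    by_cases hv : IsLeaf S v <;> simp [specRecon, rootDupRecon, hv]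
  rw [PLR, dAsym, dAsym, hpath₁, hpath₂, hlbl₁, hlbl₂]
  ring

end Witnesses

theorem stmt13_general (hS : IsSpeciesTree S) (n : ℕ) (hn : numLeaves S = n)
    (α : ℝ) (hα₀ : 0 ≤ α) (hα₁ : α ≤ 1) :
    (∀ (VG₁ VG₂ : Type) [Fintype VG₁] [Fintype VG₂]
      (𝒢₁ : Recon {s : VS // IsLeaf S s} VG₁ VS S)
      (𝒢₂ : Recon {s : VS // IsLeaf S s} VG₂ VS S),
      OneGenePerSpecies 𝒢₁ → OneGenePerSpecies 𝒢₂ →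
      ∀ (m₁₂ : VG₁ → VG₂) (m₂₁ : VG₂ → VG₁),
        IsLcaMap 𝒢₁ 𝒢₂ m₁₂ → IsLcaMap 𝒢₂ 𝒢₁ m₂₁ →
        PLR α 𝒢₁ 𝒢₂ m₁₂ m₂₁ ≤
          α * ((n : ℝ) - 1) * ((n : ℝ) - 2) + (1 - α) * (2 * (n : ℝ) - 2)) ∧
    (Caterpillar S →
      (Hsum S : ℝ) = ((n : ℝ) - 1) * ((n : ℝ) - 2) / 2 ∧
      ∃ (𝒢₁ 𝒢₂ : Recon {s : VS // IsLeaf S s} VS VS S) (m₁₂ m₂₁ : VS → VS),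
        OneGenePerSpecies 𝒢₁ ∧ OneGenePerSpecies 𝒢₂ ∧
        IsLcaMap 𝒢₁ 𝒢₂ m₁₂ ∧ IsLcaMap 𝒢₂ 𝒢₁ m₂₁ ∧
        PLR α 𝒢₁ 𝒢₂ m₁₂ m₂₁ =
          α * ((n : ℝ) - 1) * ((n : ℝ) - 2) + (1 - α) * (2 * (n : ℝ) - 2)) := by
  obtain ⟨k, hk⟩ : ∃ k, #{u | ¬ IsLeaf S u} = k := ⟨_, rfl⟩
  have hleaves : numLeaves S = k + 1 := hk ▸ hS.card_internal_add_one_eq_numLeaves.symm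
  have hnk : (n : ℝ) = k + 1 := by rw [← hn, hleaves]; push_cast; rfl
  refine ⟨fun VG₁ VG₂ _ _ 𝒢₁ 𝒢₂ hOne₁ hOne₂ m₁₂ m₂₁ hm₁₂ hm₂₁ => ?_, fun hcat => ?_⟩
  · have hH := S.two_mul_hsum_add_card_le
    rw [hk] at hH
    have hpath : (dPath 𝒢₁ 𝒢₂ m₁₂ + dPath 𝒢₂ 𝒢₁ m₂₁ + k : ℝ) ≤ k * k := by
      have := dPath_le_hsum hS hOne₁ hOne₂ hm₁₂
      have := dPath_le_hsum hS hOne₂ hOne₁ hm₂₁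
      exact_mod_cast (show dPath 𝒢₁ 𝒢₂ m₁₂ + dPath 𝒢₂ 𝒢₁ m₂₁ + k ≤ k * k by omega)
    have hlbl : (dLbl 𝒢₁ 𝒢₂ m₁₂ + dLbl 𝒢₂ 𝒢₁ m₂₁ : ℝ) ≤ 2 * k := by
      have := dLbl_add_one_le hS hm₁₂
      have := dLbl_add_one_le hS hm₂₁
      exact_mod_cast (show dLbl 𝒢₁ 𝒢₂ m₁₂ + dLbl 𝒢₂ 𝒢₁ m₂₁ ≤ 2 * k by omega)
    rw [PLR, dAsym, dAsym, hnk]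
    nlinarith [mul_le_mul_of_nonneg_left hpath hα₀,
      mul_le_mul_of_nonneg_left hlbl (sub_nonneg.mpr hα₁)]
  · have hH : (2 * Hsum S + k : ℝ) = k * k := by
      exact_mod_cast hk ▸ hcat.two_mul_hsum_add_card_eq
    refine ⟨by rw [hnk]; linarith, specRecon S hS, rootDupRecon S hS, id, id, fun _ => rfl,
      fun g => if_pos g.2, isLCA_image_val_anc S hS, isLCA_image_val_anc S hS, ?_⟩
    rw [plr_specRecon_rootDupRecon, hk, hnk]
    linear_combination α * hH

/-- for every species tree on `n ≥ 2` leaves,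
`diam(PLR,S) ≤ α(n−1)(n−2) + (1−α)(2n−2)`; if `S` is a caterpillar, then
`H(S) = (n−1)(n−2)/2` and the bound is attained (so caterpillars maximize the diameter). -/
theorem stmt13 (hS : IsSpeciesTree S) (n : ℕ) (hn : numLeaves S = n) (h2 : 2 ≤ n)
    (α : ℝ) (hα₀ : 0 ≤ α) (hα₁ : α ≤ 1) :
    (∀ (VG₁ VG₂ : Type) [Fintype VG₁] [Fintype VG₂]
      (𝒢₁ : Recon {s : VS // IsLeaf S s} VG₁ VS S)
      (𝒢₂ : Recon {s : VS // IsLeaf S s} VG₂ VS S),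
      OneGenePerSpecies 𝒢₁ → OneGenePerSpecies 𝒢₂ →
      ∀ (m₁₂ : VG₁ → VG₂) (m₂₁ : VG₂ → VG₁),
        IsLcaMap 𝒢₁ 𝒢₂ m₁₂ → IsLcaMap 𝒢₂ 𝒢₁ m₂₁ →
        PLR α 𝒢₁ 𝒢₂ m₁₂ m₂₁ ≤
          α * ((n : ℝ) - 1) * ((n : ℝ) - 2) + (1 - α) * (2 * (n : ℝ) - 2)) ∧
    (Caterpillar S →
      (Hsum S : ℝ) = ((n : ℝ) - 1) * ((n : ℝ) - 2) / 2 ∧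
      ∃ (𝒢₁ 𝒢₂ : Recon {s : VS // IsLeaf S s} VS VS S) (m₁₂ m₂₁ : VS → VS),
        OneGenePerSpecies 𝒢₁ ∧ OneGenePerSpecies 𝒢₂ ∧
        IsLcaMap 𝒢₁ 𝒢₂ m₁₂ ∧ IsLcaMap 𝒢₂ 𝒢₁ m₂₁ ∧
        PLR α 𝒢₁ 𝒢₂ m₁₂ m₂₁ =
          α * ((n : ℝ) - 1) * ((n : ℝ) - 2) + (1 - α) * (2 * (n : ℝ) - 2)) :=
  stmt13_general hS n hn α hα₀ hα₁
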